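/- Let P be a finite poset, f : P → P' a surjective order-preserving map, Q = P ∪ {x} a one-point extension with down-set L = {p : p < x} and up-set U = {p : x < p}, and assume f(L) ∩ f(U) = ∅. Let Q' = P' ∪ {x'} ordered by inserting x' strictly above the down-set generated by f(L) and strictly below the up-set generated by f(U) (y < x' iff y ∈ f(L), x' < y iff y ∈ f(U), other new pairs incomparable). Then the relation so defined on Q' is a partial order, and the map f' extending f with f(x) = x' is order-preserving and surjective onto Q'. -/
import Mathlib


/-- The order relation on `Q' = P' ∪ {x'}` (encoded as `Option P'` with `none = x'`),
obtained by inserting `x'` strictly above the down-set generated by `SL` and strictly below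
the up-set generated by `SU`, all other new pairs being incomparable. -/
def extLe {P' : Type*} [PartialOrder P'] (SL SU : Set P') :
    Option P' → Option P' → Prop
  | some a, some b => a ≤ b
  | some a, none => ∃ c ∈ SL, a ≤ c
  | none, some b => ∃ c ∈ SU, c ≤ b
  | none, none => True

/-- Let `P` be a finite poset, `f : P → P'` a surjective order-preserving map, and `Q` a
one-point extension of `P` by `x` (with `e : P ↪o Q`, `Q = e(P) ∪ {x}`), with
`L = {p : e p < x}` and `U = {p : x < e p}`, and assume `f(L) ∩ f(U) = ∅`. Then the
relation `extLe (f '' L) (f '' U)` on `Q' = P' ∪ {x'}` is a partial order (reflexive,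
antisymmetric and transitive), and every map `f' : Q → Q'` extending `f` with
`f'(x) = x'` is order-preserving and surjective onto `Q'`. -/
theorem poset_one_point_hom_extension_disjoint
    {P P' Q : Type*} [PartialOrder P] [PartialOrder P'] [PartialOrder Q] [Fintype P]
    (f : P → P') (hf_mono : Monotone f) (hf_surj : Function.Surjective f)
    (e : P ↪o Q) (x : Q) (hx : x ∉ Set.range e)
    (hcover : ∀ q : Q, q = x ∨ ∃ p : P, e p = q)
    (hdisj : f '' {p | e p < x} ∩ f '' {p | x < e p} = ∅) :
    (∀ u : Option P', extLe (f '' {p | e p < x}) (f '' {p | x < e p}) u u) ∧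
    (∀ u v : Option P', extLe (f '' {p | e p < x}) (f '' {p | x < e p}) u v →
      extLe (f '' {p | e p < x}) (f '' {p | x < e p}) v u → u = v) ∧
    (∀ u v w : Option P', extLe (f '' {p | e p < x}) (f '' {p | x < e p}) u v →
      extLe (f '' {p | e p < x}) (f '' {p | x < e p}) v w →
      extLe (f '' {p | e p < x}) (f '' {p | x < e p}) u w) ∧
    (∀ f' : Q → Option P', (∀ p : P, f' (e p) = some (f p)) → f' x = none →
      (∀ q q' : Q, q ≤ q' →
        extLe (f '' {p | e p < x}) (f '' {p | x < e p}) (f' q) (f' q')) ∧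
      Function.Surjective f') := by
  set SL := f '' {p | e p < x} with hSL
  set SU := f '' {p | x < e p} with hSU
  -- key: everything in SL is ≤ everything in SU
  have key : ∀ c ∈ SL, ∀ d ∈ SU, c ≤ d := by
    rintro c ⟨l, hl, rfl⟩ d ⟨u, hu, rfl⟩
    exact hf_mono (le_of_lt (e.lt_iff_lt.mp (lt_trans hl hu)))
  have contra : ∀ c ∈ SL, ∀ d ∈ SU, d ≤ c → False := by
    intro c hc d hd hdc
    have hcd : c = d := le_antisymm (key c hc d hd) hdc
    have : c ∈ SL ∩ SU := ⟨hc, hcd ▸ hd⟩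
    rw [hdisj] at this
    exact this
  refine ⟨?_, ?_, ?_, ?_⟩
  · rintro (_ | a) <;> simp [extLe]
  · rintro (_ | a) (_ | b) h1 h2
    · rfl
    · obtain ⟨d, hd, hdb⟩ := h1
      obtain ⟨c, hc, hbc⟩ := h2
      exact absurd (le_trans hdb hbc) (fun h => contra c hc d hd h)
    · obtain ⟨c, hc, hac⟩ := h1
      obtain ⟨d, hd, hda⟩ := h2
      exact absurd (le_trans hda hac) (fun h => contra c hc d hd h)
    · exact congrArg some (le_antisymm h1 h2)
  · intro u v w h1 h2
    exact match u, v, w, h1, h2 with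
    | none, none, none, _, _ => trivial
    | none, none, some w, _, h2 => h2
    | none, some b, none, _, _ => trivial
    | none, some b, some w, ⟨d, hd, hdb⟩, h2 => ⟨d, hd, le_trans hdb h2⟩
    | some a, none, none, h1, _ => h1
    | some a, none, some w, ⟨c, hc, hac⟩, ⟨d, hd, hdw⟩ =>
        le_trans hac (le_trans (key c hc d hd) hdw)
    | some a, some b, none, h1, ⟨c, hc, hbc⟩ => ⟨c, hc, le_trans h1 hbc⟩
    | some a, some b, some w, h1, h2 => le_trans h1 h2
  · intro f' hf'e hf'x
    constructor
    · intro q q' hqq'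
      rcases hcover q with rfl | ⟨p, rfl⟩ <;> rcases hcover q' with h' | ⟨p', rfl⟩
      · subst h'; rw [hf'x]; trivial
      · rw [hf'x, hf'e]
        have hlt : q < e p' := lt_of_le_of_ne hqq' (fun h => hx ⟨p', h.symm⟩)
        exact ⟨f p', ⟨p', hlt, rfl⟩, le_rfl⟩
      · subst h'; rw [hf'x, hf'e]
        have hlt : e p < q' := lt_of_le_of_ne hqq' (fun h => hx ⟨p, h⟩)
        exact ⟨f p, ⟨p, hlt, rfl⟩, le_rfl⟩
      · rw [hf'e, hf'e]
        exact hf_mono (e.le_iff_le.mp hqq')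
    · rintro (_ | a)
      · exact ⟨x, hf'x⟩
      · obtain ⟨p, rfl⟩ := hf_surj a
        exact ⟨e p, hf'e p⟩
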